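/- The 6-dimensional Lie algebra g̃_{6.8}^{p=0}, with nonzero brackets [X₁,X₆] = -(b+c)X₁, [X₂,X₆] = bX₂, [X₃,X₆] = cX₃ where b, c are nonzero reals with b+c ≠ 0, admits no symplectic structure: every closed 2-form ω ∈ Λ²g̃* satisfies ω³ = 0. -/

import Mathlib

/-!
STATEMENT 14: The Lie algebra g̃_{6.8}^{p=0}, with nonzero brackets
[X₁,X₆] = −(b+c)X₁, [X₂,X₆] = bX₂, [X₃,X₆] = cX₃ (b, c, b+c nonzero) admits no
symplectic structure: every closed 2-form ω satisfies ω³ = 0, i.e. every closed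
2-form is degenerate (its Gram matrix has zero determinant — for a 2-form on a
6-dimensional space, ω ∧ ω ∧ ω ≠ 0 is equivalent to invertibility of the Gram matrix).

The Chevalley–Eilenberg differential is dα¹ = (b+c)α¹∧α⁶, dα² = −bα²∧α⁶,
dα³ = −cα³∧α⁶, dα⁴ = dα⁵ = dα⁶ = 0; the complex is modeled concretely below
(indices shifted down by one).
-/

open Finset Module

/-- The exterior algebra on six degree-one generators α¹,…,α⁶, as coordinates on the
basis of increasing wedge monomials indexed by subsets of `Fin 6`. -/
abbrev Lam : Type := Finset (Fin 6) → ℝ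

/-- The basis monomial α^S. -/
noncomputable def gen (S : Finset (Fin 6)) : Lam := Pi.single S 1

/-- Koszul sign when interleaving (the increasing enumerations of) `T` and `U`:
(−1) to the number of inversions. -/
def koszulSign (T U : Finset (Fin 6)) : ℝ :=
  (-1 : ℝ) ^ (((T ×ˢ U).filter fun p => p.2 < p.1).card)

/-- The wedge (exterior) product in coordinates. -/
noncomputable def wedge (f h : Lam) : Lam := fun S =>
  ∑ T ∈ S.powerset, koszulSign T (S \ T) * f T * h (S \ T)

/-- The Chevalley–Eilenberg differential: the unique antiderivation with dαⁱ = g i,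
given on the basis monomial α^S by d α^S = Σ_{i ∈ S} (−1)^{#{j ∈ S | j < i}} (g i) ∧ α^{S∖i}. -/
noncomputable def ceDiff (g : Fin 6 → Lam) : Lam →ₗ[ℝ] Lam :=
  (Pi.basisFun ℝ (Finset (Fin 6))).constr ℝ fun S =>
    ∑ i ∈ S, ((-1 : ℝ) ^ ((S.filter fun j => j < i).card)) • wedge (g i) (gen (S.erase i))

/-- The subspace Λᵏ of homogeneous elements of degree `k`. -/
def degSub (k : ℕ) : Submodule ℝ Lam where
  carrier := {f | ∀ S : Finset (Fin 6), S.card ≠ k → f S = 0}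
  add_mem' := by
    intro f g hf hg S hS
    simp only [Pi.add_apply, hf S hS, hg S hS, add_zero]
  zero_mem' := by intro S hS; rfl
  smul_mem' := by
    intro c f hf S hS
    simp only [Pi.smul_apply, hf S hS, smul_zero]

/-- Closed k-forms. -/
noncomputable def Zspace (D : Lam →ₗ[ℝ] Lam) (k : ℕ) : Submodule ℝ Lam :=
  degSub k ⊓ LinearMap.ker D

/-- Exact k-forms (the image of the (k−1)-forms under the differential). -/
noncomputable def Bspace (D : Lam →ₗ[ℝ] Lam) (k : ℕ) : Submodule ℝ Lam :=
  (degSub (k - 1)).map D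

/-- The Gram matrix of a 2-form ω: the antisymmetric matrix (ω(Xᵢ,Xⱼ))ᵢⱼ.  A 2-form on a
6-dimensional space is non-degenerate (equivalently ω ∧ ω ∧ ω ≠ 0) iff this matrix is
invertible, i.e. has nonzero determinant. -/
noncomputable def gram (f : Lam) : Matrix (Fin 6) (Fin 6) ℝ :=
  Matrix.of fun i j => if i < j then f {i, j} else if j < i then -(f {j, i}) else 0

/-- Generator differentials of g̃_{6.8}^{p=0} (0-indexed). -/
noncomputable def gDiff (b c : ℝ) : Fin 6 → Lam :=
  ![(b + c) • gen {0, 5}, (-b) • gen {1, 5}, (-c) • gen {2, 5}, 0, 0, 0]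

/-!
Write `dαᵏ = wₖ αᵏ ∧ α⁶` with `w = (b + c, -b, -c, 0, 0, 0)`. Then
`d(αⁱ ∧ αʲ) = -(wᵢ + wⱼ) αⁱ ∧ αʲ ∧ α⁶` for `i < j < 6` and `d(αⁱ ∧ α⁶) = 0`, so a closed
2-form has `ωᵢⱼ = 0` whenever `wᵢ + wⱼ ≠ 0`. As `b`, `c` and `b + c` are nonzero, this kills
`ω₁ⱼ` and `ω₂ⱼ` for all `j ≤ 5`: the first two rows of the Gram matrix are both multiples of
`e₆`, so it is singular.
-/

lemma gen_eq_basisFun (S : Finset (Fin 6)) : gen S = Pi.basisFun ℝ (Finset (Fin 6)) S := by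
  simp [gen]

lemma ceDiff_gen (g : Fin 6 → Lam) (S : Finset (Fin 6)) :
    ceDiff g (gen S) = ∑ i ∈ S,
      ((-1 : ℝ) ^ ((S.filter fun j => j < i).card)) • wedge (g i) (gen (S.erase i)) := by
  rw [gen_eq_basisFun, ceDiff, Basis.constr_basis]

lemma ceDiff_apply (g : Fin 6 → Lam) (ω : Lam) (A : Finset (Fin 6)) :
    ceDiff g ω A = ∑ S, ω S * ceDiff g (gen S) A := by
  conv_lhs => rw [← (Pi.basisFun ℝ (Finset (Fin 6))).sum_repr ω]
  simp [gen_eq_basisFun, Finset.sum_apply]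

lemma wedge_smul_left (r : ℝ) (f h : Lam) : wedge (r • f) h = r • wedge f h := by
  funext A
  simp only [wedge, Pi.smul_apply, smul_eq_mul, Finset.mul_sum]
  exact Finset.sum_congr rfl fun _ _ => by ring

lemma wedge_gen_gen (P Q : Finset (Fin 6)) :
    wedge (gen P) (gen Q) = if Disjoint P Q then koszulSign P Q • gen (P ∪ Q) else 0 := by
  funext A
  have hsupp : (P ⊆ A ∧ A \ P = Q) ↔ (Disjoint P Q ∧ A = P ∪ Q) := by
    constructor
    · rintro ⟨hPA, rfl⟩
      exact ⟨Finset.disjoint_sdiff, (Finset.union_sdiff_of_subset hPA).symm⟩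
    · rintro ⟨hPQ, rfl⟩
      exact ⟨Finset.subset_union_left, by rw [Finset.union_sdiff_left, hPQ.sdiff_eq_right]⟩
  have hwedge : wedge (gen P) (gen Q) A = if P ⊆ A ∧ A \ P = Q then koszulSign P Q else 0 := by
    unfold wedge gen
    split_ifs with h
    · rw [Finset.sum_eq_single_of_mem P (Finset.mem_powerset.2 h.1)]
      · simp [h.2]
      · intro T _ hT
        simp [Pi.single_apply, hT]
    · refine Finset.sum_eq_zero fun T hT => ?_
      rcases eq_or_ne T P with rfl | hTP
      · have hQ : A \ T ≠ Q := fun hQ => h ⟨Finset.mem_powerset.1 hT, hQ⟩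
        simp [hQ]
      · simp [Pi.single_apply, hTP]
  simp only [hwedge, hsupp]
  by_cases hPQ : Disjoint P Q <;> by_cases hA : A = P ∪ Q <;> simp [hPQ, hA, gen]

lemma ceDiff_gen_pair (g : Fin 6 → Lam) {k l : Fin 6} (hkl : k < l) :
    ceDiff g (gen {k, l}) = wedge (g k) (gen {l}) - wedge (g l) (gen {k}) := by
  have hk : ({k, l} : Finset (Fin 6)).filter (· < k) = ∅ := by
    ext m; simp; omega
  have hl : ({k, l} : Finset (Fin 6)).filter (· < l) = {k} := by
    ext m; simp; omega
  rw [ceDiff_gen, Finset.sum_pair hkl.ne, hk, hl, Finset.erase_insert (by simpa using hkl.ne),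
    Finset.pair_comm, Finset.erase_insert (by simpa using hkl.ne')]
  simp [sub_eq_add_neg]

lemma koszulSign_pair_five {k l : Fin 6} (hkl : k < l) (hl : l < 5) :
    koszulSign {k, 5} {l} = -1 ∧ koszulSign {l, 5} {k} = 1 := by
  have hcount : ∀ k l : Fin 6, k < l → l < 5 →
      (({k, 5} ×ˢ {l} : Finset (Fin 6 × Fin 6)).filter fun p => p.2 < p.1).card = 1 ∧
      (({l, 5} ×ˢ {k} : Finset (Fin 6 × Fin 6)).filter fun p => p.2 < p.1).card = 2 := by
    decide
  obtain ⟨h1, h2⟩ := hcount k l hkl hl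
  rw [koszulSign, koszulSign, h1, h2]
  norm_num

lemma pair_eq_of_insert_five_eq {x y i j : Fin 6} (hx : x ≠ 5) (hy : y ≠ 5) (hi : i ≠ 5)
    (hj : j ≠ 5) (h : ({x, y, 5} : Finset (Fin 6)) = {i, j, 5}) :
    ({x, y} : Finset (Fin 6)) = {i, j} := by
  ext m
  have hm := congrArg (m ∈ ·) h
  simp only [Finset.mem_insert, Finset.mem_singleton, eq_iff_iff] at hm ⊢
  by_cases m5 : m = 5
  · subst m5; simp [hx.symm, hy.symm, hi.symm, hj.symm]
  · simpa [m5] using hm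

lemma Matrix.det_eq_zero_of_rows_vanish_off {K n : Type*} [Field K] [Fintype n] [DecidableEq n]
    (M : Matrix n n K) {i i' k : n} (hii' : i ≠ i') (hi : ∀ j ≠ k, M i j = 0)
    (hi' : ∀ j ≠ k, M i' j = 0) : M.det = 0 := by
  by_cases hik : M i k = 0
  · refine Matrix.det_eq_zero_of_row_eq_zero i fun j => ?_
    rcases eq_or_ne j k with rfl | hj
    exacts [hik, hi j hj]
  · rw [← Matrix.det_updateRow_add_smul_self M hii'.symm (-(M i' k / M i k))]
    refine Matrix.det_eq_zero_of_row_eq_zero i' fun j => ?_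
    rcases eq_or_ne j k with rfl | hj
    · simp [Matrix.updateRow_self, hik]
    · simp [hi j hj, hi' j hj]

section diagonal

variable (w : Fin 6 → ℝ)

noncomputable def diagDiff : Fin 6 → Lam := fun k => w k • gen {k, 5}

lemma ceDiff_diagDiff_gen_pair {k l : Fin 6} (hkl : k < l) (hl : l < 5) :
    ceDiff (diagDiff w) (gen {k, l}) = -(w k + w l) • gen {k, l, 5} := by
  obtain ⟨hs1, hs2⟩ := koszulSign_pair_five hkl hl
  have hd1 : Disjoint ({k, 5} : Finset (Fin 6)) {l} := by simp [hkl.ne', hl.ne]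
  have hd2 : Disjoint ({l, 5} : Finset (Fin 6)) {k} := by simp [hkl.ne, (hkl.trans hl).ne]
  have hu1 : ({k, 5} ∪ {l} : Finset (Fin 6)) = {k, l, 5} := by ext; simp; tauto
  have hu2 : ({l, 5} ∪ {k} : Finset (Fin 6)) = {k, l, 5} := by ext; simp; tauto
  rw [ceDiff_gen_pair _ hkl]
  simp only [diagDiff, wedge_smul_left, wedge_gen_gen, if_pos hd1, if_pos hd2, hs1, hs2, hu1,
    hu2]
  module

lemma ceDiff_diagDiff_gen_pair_five (hw : w 5 = 0) {k : Fin 6} (hk : k < 5) :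
    ceDiff (diagDiff w) (gen {k, 5}) = 0 := by
  have hnd : ¬Disjoint ({k, 5} : Finset (Fin 6)) {5} := by simp
  rw [ceDiff_gen_pair _ hk]
  simp only [diagDiff]
  rw [wedge_smul_left, wedge_smul_left, hw, zero_smul, wedge_gen_gen, if_neg hnd, smul_zero,
    sub_zero]

lemma ceDiff_diagDiff_apply_pair_five (hw : w 5 = 0) {ω : Lam} (hω : ω ∈ degSub 2)
    {i j : Fin 6} (hij : i < j) (hj : j < 5) :
    ceDiff (diagDiff w) ω {i, j, 5} = -(w i + w j) * ω {i, j} := by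
  rw [ceDiff_apply, Finset.sum_eq_single {i, j}]
  · rw [ceDiff_diagDiff_gen_pair w hij hj]
    simp [gen, mul_comm]
  · intro S _ hS
    by_cases hcard : S.card = 2
    · obtain ⟨x, y, hxy, rfl⟩ := Finset.card_eq_two.1 hcard
      suffices ceDiff (diagDiff w) (gen {x, y}) {i, j, 5} = 0 by rw [this, mul_zero]
      wlog hlt : x < y generalizing x y
      · rw [Finset.pair_comm] at hS hcard ⊢
        exact this y x hxy.symm (Finset.mem_univ _) hS hcard
          (lt_of_le_of_ne (not_lt.1 hlt) hxy.symm)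
      obtain hy | rfl : y < 5 ∨ y = 5 := by omega
      · rw [ceDiff_diagDiff_gen_pair w hlt hy]
        have hne : ({x, y, 5} : Finset (Fin 6)) ≠ {i, j, 5} := fun h =>
          hS (pair_eq_of_insert_five_eq (hlt.trans hy).ne hy.ne (hij.trans hj).ne hj.ne h)
        simp [gen, hne]
      · rw [ceDiff_diagDiff_gen_pair_five w hw hlt]
        rfl
    · rw [hω S hcard, zero_mul]
  · exact fun h => (h (Finset.mem_univ _)).elim

lemma apply_pair_eq_zero_of_ceDiff_diagDiff_eq_zero (hw : w 5 = 0) {ω : Lam}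
    (hω : ω ∈ degSub 2) (hd : ceDiff (diagDiff w) ω = 0) {i j : Fin 6} (hij : i < j) (hj : j < 5)
    (hwij : w i + w j ≠ 0) : ω {i, j} = 0 := by
  have hcoeff := ceDiff_diagDiff_apply_pair_five w hw hω hij hj
  rw [hd, Pi.zero_apply, eq_comm] at hcoeff
  exact (mul_eq_zero.1 hcoeff).resolve_left (neg_ne_zero.2 hwij)

end diagonal

lemma gDiff_eq_diagDiff (b c : ℝ) : gDiff b c = diagDiff ![b + c, -b, -c, 0, 0, 0] := by
  funext k; fin_cases k <;> simp [gDiff, diagDiff]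

theorem no_symplectic_g68 (b c : ℝ) (hb : b ≠ 0) (hc : c ≠ 0) (hbc : b + c ≠ 0) :
    ∀ ω ∈ degSub 2 ⊓ LinearMap.ker (ceDiff (gDiff b c)), (gram ω).det = 0 := by
  rintro ω ⟨hω, hclosed⟩
  rw [SetLike.mem_coe, LinearMap.mem_ker, gDiff_eq_diagDiff] at hclosed
  have hvanish {i j : Fin 6} (hij : i < j) (hj : j < 5) :=
    apply_pair_eq_zero_of_ceDiff_diagDiff_eq_zero _ rfl hω hclosed hij hj
  have h01 : ω {0, 1} = 0 := hvanish (by decide) (by decide) (by simpa using hc)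
  have h02 : ω {0, 2} = 0 := hvanish (by decide) (by decide) (by simpa using hb)
  have h03 : ω {0, 3} = 0 := hvanish (by decide) (by decide) (by simpa using hbc)
  have h04 : ω {0, 4} = 0 := hvanish (by decide) (by decide) (by simpa using hbc)
  have h12 : ω {1, 2} = 0 :=
    hvanish (by decide) (by decide) (by simpa [add_comm] using neg_ne_zero.2 hbc)
  have h13 : ω {1, 3} = 0 := hvanish (by decide) (by decide) (by simpa using hb)
  have h14 : ω {1, 4} = 0 := hvanish (by decide) (by decide) (by simpa using hb)
  refine Matrix.det_eq_zero_of_rows_vanish_off (gram ω) (i := 0) (i' := 1) (k := 5) (by decide)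
    ?_ ?_ <;> intro j hj <;> fin_cases j <;>
    simp [gram, h01, h02, h03, h04, h12, h13, h14] at hj ⊢
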